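/- Let β > 0, λ > 0, and c ≥ 0, and define φ_c(x) := 1 − e^{−cx}. Then φ_c satisfies the fixed-point equation φ_c(x) = 1 − exp(−(x/β)·∫ y·φ_c(y) dμ̂(y)) for all x ∈ (0,β] if and only if c = 0 or G(c) = 1. -/

import Mathlib

open Real MeasureTheory

/-! `∫ y φ_c(y) dμ̂(y) = β c G(c)`, so, comparing exponents at `x = β`, the fixed-point equation
holds exactly when `c = c G(c)`. -/

/-- The measure `μ̂` on `ℝ`: the point mass `(λβ+1)e^{−λβ}` at `β` plus the measure with
density `x ↦ βλ²e^{−λx}` on `(0,β)` with respect to Lebesgue measure. -/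
noncomputable def muhat (β lam : ℝ) : Measure ℝ :=
  (ENNReal.ofReal ((lam * β + 1) * exp (-(lam * β)))) • Measure.dirac β
    + (volume.restrict (Set.Ioo 0 β)).withDensity
        (fun x => ENNReal.ofReal (β * lam ^ 2 * exp (-(lam * x))))

noncomputable def muhatG (β lam γ : ℝ) : ℝ :=
  (2 * lam + γ) / (lam + γ) ^ 2 * (1 - exp (-((lam + γ) * β)))
    - lam * β / (lam + γ) * exp (-((lam + γ) * β))

lemma hasDerivAt_mul_exp_neg_mul_antideriv {s : ℝ} (hs : s ≠ 0) (x : ℝ) :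
    HasDerivAt (fun x => -(s * x + 1) / s ^ 2 * exp (-(s * x))) (x * exp (-(s * x))) x := by
  have hexp : HasDerivAt (fun x : ℝ => exp (-(s * x))) (exp (-(s * x)) * -s) x := by
    simpa using (((hasDerivAt_id x).const_mul s).neg).exp
  have hlin : HasDerivAt (fun x : ℝ => -(s * x + 1) / s ^ 2) (-s / s ^ 2) x := by
    simpa using (((hasDerivAt_id x).const_mul s).add_const 1).neg.div_const (s ^ 2)
  refine (hlin.mul hexp).congr_deriv ?_
  field_simp
  ring

lemma integral_mul_exp_neg_mul {s : ℝ} (hs : s ≠ 0) (β : ℝ) :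
    ∫ x in (0 : ℝ)..β, x * exp (-(s * x)) = (1 - (1 + s * β) * exp (-(s * β))) / s ^ 2 := by
  rw [intervalIntegral.integral_eq_sub_of_hasDerivAt
    (fun x _ => hasDerivAt_mul_exp_neg_mul_antideriv hs x)
    (Continuous.intervalIntegrable (by fun_prop) _ _)]
  field_simp
  simp only [mul_zero, neg_zero, exp_zero]
  ring

lemma integral_muhat {β lam : ℝ} (hβ : 0 ≤ β) (hlam : 0 ≤ lam) {f : ℝ → ℝ}
    (hf : Continuous f) :
    ∫ y, f y ∂(muhat β lam)
      = (lam * β + 1) * exp (-(lam * β)) * f β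
        + ∫ x in (0 : ℝ)..β, β * lam ^ 2 * exp (-(lam * x)) * f x := by
  set g : ℝ → ℝ := fun x => β * lam ^ 2 * exp (-(lam * x))
  have hg : Continuous g := by fun_prop
  have hg_nonneg : ∀ x, 0 ≤ g x := fun x => by positivity
  have hint_dirac : Integrable f
      (ENNReal.ofReal ((lam * β + 1) * exp (-(lam * β))) • Measure.dirac β) :=
    (integrable_dirac enorm_lt_top).smul_measure ENNReal.ofReal_ne_top
  have hint_density : Integrable f
      ((volume.restrict (Set.Ioo 0 β)).withDensity fun x => ENNReal.ofReal (g x)) := by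
    rw [integrable_withDensity_iff (by fun_prop) (.of_forall fun _ => ENNReal.ofReal_lt_top)]
    simp_rw [ENNReal.toReal_ofReal (hg_nonneg _)]
    exact ((hf.mul hg).integrableOn_Icc).mono_set Set.Ioo_subset_Icc_self
  have hdensity : ∫ y, f y ∂((volume.restrict (Set.Ioo 0 β)).withDensity
      fun x => ENNReal.ofReal (g x)) = ∫ x in Set.Ioo 0 β, g x * f x := by
    rw [integral_withDensity_eq_integral_toReal_smul (by fun_prop)
      (.of_forall fun _ => ENNReal.ofReal_lt_top)]
    simp_rw [ENNReal.toReal_ofReal (hg_nonneg _), smul_eq_mul]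
  rw [muhat, integral_add_measure hint_dirac hint_density, integral_smul_measure,
    integral_dirac, hdensity, ← integral_Ioc_eq_integral_Ioo,
    ← intervalIntegral.integral_of_le hβ, smul_eq_mul, ENNReal.toReal_ofReal (by positivity)]

lemma integral_mul_one_sub_exp_muhat {β lam c : ℝ} (hβ : 0 ≤ β) (hlam : 0 < lam) (hc : 0 ≤ c) :
    ∫ y, y * (1 - exp (-(c * y))) ∂(muhat β lam) = β * c * muhatG β lam c := by
  have hlamc : lam + c ≠ 0 := by positivity
  have hsplit : ∀ x : ℝ, β * lam ^ 2 * exp (-(lam * x)) * (x * (1 - exp (-(c * x))))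
      = β * lam ^ 2 * (x * exp (-(lam * x))) - β * lam ^ 2 * (x * exp (-((lam + c) * x))) := by
    intro x
    rw [show -((lam + c) * x) = -(lam * x) + -(c * x) by ring, exp_add]
    ring
  rw [integral_muhat hβ hlam.le (by fun_prop), intervalIntegral.integral_congr (fun x _ => hsplit x),
    intervalIntegral.integral_sub (Continuous.intervalIntegrable (by fun_prop) _ _)
    (Continuous.intervalIntegrable (by fun_prop) _ _),
    intervalIntegral.integral_const_mul, intervalIntegral.integral_const_mul,
    integral_mul_exp_neg_mul hlam.ne', integral_mul_exp_neg_mul hlamc, muhatG,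
    show -((lam + c) * β) = -(lam * β) + -(c * β) by ring, exp_add]
  field_simp
  ring

lemma forall_mem_Ioc_one_sub_exp_eq_iff {β : ℝ} (hβ : 0 < β) (a b : ℝ) :
    (∀ x ∈ Set.Ioc 0 β, 1 - exp (-(a * x)) = 1 - exp (-(b * x))) ↔ a = b := by
  refine ⟨fun h => ?_, fun hab _ _ => by rw [hab]⟩
  have hexp := exp_injective (sub_right_injective (h β ⟨hβ, le_rfl⟩))
  exact mul_right_cancel₀ hβ.ne' (neg_injective hexp)

/-- For `β > 0`, `λ > 0` and `c ≥ 0`, the function `φ_c(x) = 1 − e^{−cx}` satisfies the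
fixed-point equation `φ_c(x) = 1 − exp(−(x/β)·∫ y·φ_c(y) dμ̂(y))` for all `x ∈ (0,β]`
if and only if `c = 0` or `G(c) = 1`. -/
theorem stmt_9 (β lam c : ℝ) (hβ : 0 < β) (hlam : 0 < lam) (hc : 0 ≤ c)
    (G : ℝ → ℝ)
    (hG : ∀ g : ℝ, G g = (2 * lam + g) / (lam + g) ^ 2 * (1 - exp (-((lam + g) * β)))
      - lam * β / (lam + g) * exp (-((lam + g) * β))) :
    (∀ x ∈ Set.Ioc (0:ℝ) β,
        1 - exp (-(c * x))
          = 1 - exp (-((x / β) * ∫ y, y * (1 - exp (-(c * y))) ∂(muhat β lam))))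
      ↔ (c = 0 ∨ G c = 1) := by
  have hGc : G c = muhatG β lam c := hG c
  have hexponent : ∀ x, x / β * (β * c * G c) = c * G c * x := fun x => by
    field_simp
  rw [integral_mul_one_sub_exp_muhat hβ.le hlam hc, ← hGc]
  simp_rw [hexponent]
  rw [forall_mem_Ioc_one_sub_exp_eq_iff hβ, eq_comm, mul_right_eq_self₀, or_comm]
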